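/- Monotonicity: for all sets Γ, Δ of formulas, every formula χ, each sign * ∈ {+,−}, and all bases B and C, if Γ;Δ ⊩*_B χ and C ⊇ B, then Γ;Δ ⊩*_C χ. -/

import Mathlib

/-- Signs: `pos` for proof/assertion, `neg` for refutation/rejection. -/
inductive Sign where
  | pos
  | neg
deriving DecidableEq

/-- The dual of a sign. -/
def Sign.dual : Sign → Sign
  | .pos => .neg
  | .neg => .pos

/-- Formulas of the bilateral logic 2Int. -/
inductive Form where
  | atom : ℕ → Form
  | bot : Form
  | top : Form
  | and : Form → Form → Form
  | or : Form → Form → Form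
  | imp : Form → Form → Form
  | coimp : Form → Form → Form
deriving DecidableEq

/-- A premise of an atomic rule: the sign required (proof or refutation), the premise atom,
and the sets of dischargeable atomic proof assumptions and refutation assumptions. -/
structure Premise where
  sign : Sign
  concl : ℕ
  dischargePf : Set ℕ
  dischargeRf : Set ℕ

/-- An atomic rule: a list of premises, a marking as proof (`pos`) or refutation (`neg`) rule,
and an atomic conclusion. -/
structure AtomicRule where
  prems : List Premise
  sign : Sign
  concl : ℕ

/-- A bilateral atomic system (base) is a set of atomic rules. -/
abbrev Base := Set AtomicRule

/-- `AtDeriv B s Γ Δ p` formalizes `Γ;Δ ⊢^s_B p`: there is a deduction in `B` of the atom `p`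
whose open atomic proof assumptions are contained in `Γ` and open atomic refutation
assumptions in `Δ`, consisting of a single assumption of sign `s` or ending with a rule of
sign `s`. -/
inductive AtDeriv (B : Base) : Sign → Set ℕ → Set ℕ → ℕ → Prop
  | hypPos {Γ Δ : Set ℕ} {p : ℕ} : p ∈ Γ → AtDeriv B .pos Γ Δ p
  | hypNeg {Γ Δ : Set ℕ} {p : ℕ} : p ∈ Δ → AtDeriv B .neg Γ Δ p
  | app {Γ Δ : Set ℕ} {R : AtomicRule} (hR : R ∈ B)
      (h : ∀ pr ∈ R.prems,
        AtDeriv B pr.sign (Γ ∪ pr.dischargePf) (Δ ∪ pr.dischargeRf) pr.concl) :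
      AtDeriv B R.sign Γ Δ R.concl

/-- Bilateral validity (support) `⊩^s_B φ`, by recursion on the formula. -/
def Supp : Form → Base → Sign → Prop
  | .atom p, B, s => AtDeriv B s ∅ ∅ p
  | .bot, B, .pos => ∀ p : ℕ, AtDeriv B .pos ∅ ∅ p ∧ AtDeriv B .neg ∅ ∅ p
  | .bot, _, .neg => True
  | .top, _, .pos => True
  | .top, B, .neg => ∀ p : ℕ, AtDeriv B .pos ∅ ∅ p ∧ AtDeriv B .neg ∅ ∅ p
  | .and φ ψ, B, .pos => Supp φ B .pos ∧ Supp ψ B .pos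
  | .and φ ψ, B, .neg => ∀ C : Base, B ⊆ C → ∀ p : ℕ,
      (((∀ D : Base, C ⊆ D → Supp φ D .neg → AtDeriv D .pos ∅ ∅ p) ∧
        (∀ D : Base, C ⊆ D → Supp ψ D .neg → AtDeriv D .pos ∅ ∅ p)) →
        AtDeriv C .pos ∅ ∅ p) ∧
      (((∀ D : Base, C ⊆ D → Supp φ D .neg → AtDeriv D .neg ∅ ∅ p) ∧
        (∀ D : Base, C ⊆ D → Supp ψ D .neg → AtDeriv D .neg ∅ ∅ p)) →
        AtDeriv C .neg ∅ ∅ p)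
  | .or φ ψ, B, .pos => ∀ C : Base, B ⊆ C → ∀ p : ℕ,
      (((∀ D : Base, C ⊆ D → Supp φ D .pos → AtDeriv D .pos ∅ ∅ p) ∧
        (∀ D : Base, C ⊆ D → Supp ψ D .pos → AtDeriv D .pos ∅ ∅ p)) →
        AtDeriv C .pos ∅ ∅ p) ∧
      (((∀ D : Base, C ⊆ D → Supp φ D .pos → AtDeriv D .neg ∅ ∅ p) ∧
        (∀ D : Base, C ⊆ D → Supp ψ D .pos → AtDeriv D .neg ∅ ∅ p)) →
        AtDeriv C .neg ∅ ∅ p)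
  | .or φ ψ, B, .neg => Supp φ B .neg ∧ Supp ψ B .neg
  | .imp φ ψ, B, .pos => ∀ C : Base, B ⊆ C → Supp φ C .pos → Supp ψ C .pos
  | .imp φ ψ, B, .neg => Supp φ B .pos ∧ Supp ψ B .neg
  | .coimp φ ψ, B, .pos => Supp φ B .pos ∧ Supp ψ B .neg
  | .coimp φ ψ, B, .neg => ∀ C : Base, B ⊆ C → Supp ψ C .neg → Supp φ C .neg

open Classical in
/-- `Cons B Γ Δ s χ` formalizes `Γ;Δ ⊩^s_B χ`. -/
def Cons (B : Base) (Γ Δ : Set Form) (s : Sign) (χ : Form) : Prop :=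
  if Γ = ∅ ∧ Δ = ∅ then Supp χ B s
  else ∀ C : Base, B ⊆ C →
    (∀ φ ∈ Γ, Supp φ C .pos) → (∀ ψ ∈ Δ, Supp ψ C .neg) → Supp χ C s


/-! Derivations in `B` are derivations in every `C ⊇ B`. Each clause of support either reduces
componentwise to atomic derivability or already quantifies over all extensions of the base, so
support, and hence consequence, is upward closed by induction on the formula. -/

lemma AtDeriv.mono {B C : Base} (hBC : B ⊆ C) {s : Sign} {Γ Δ : Set ℕ} {p : ℕ}
    (h : AtDeriv B s Γ Δ p) : AtDeriv C s Γ Δ p := by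
  induction h with
  | hypPos hp => exact .hypPos hp
  | hypNeg hp => exact .hypNeg hp
  | app hR _ ih => exact .app (hBC hR) ih

lemma Supp.mono {B C : Base} (hBC : B ⊆ C) {χ : Form} {s : Sign}
    (h : Supp χ B s) : Supp χ C s := by
  induction χ generalizing s with
  | atom p => exact AtDeriv.mono hBC h
  | bot => cases s with
    | pos => exact fun p => (h p).imp (AtDeriv.mono hBC) (AtDeriv.mono hBC)
    | neg => trivial
  | top => cases s with
    | pos => trivial
    | neg => exact fun p => (h p).imp (AtDeriv.mono hBC) (AtDeriv.mono hBC)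
  | and φ ψ ihφ ihψ => cases s with
    | pos => exact ⟨ihφ h.1, ihψ h.2⟩
    | neg => exact fun D hCD => h D (hBC.trans hCD)
  | or φ ψ ihφ ihψ => cases s with
    | pos => exact fun D hCD => h D (hBC.trans hCD)
    | neg => exact ⟨ihφ h.1, ihψ h.2⟩
  | imp φ ψ ihφ ihψ => cases s with
    | pos => exact fun D hCD => h D (hBC.trans hCD)
    | neg => exact ⟨ihφ h.1, ihψ h.2⟩
  | coimp φ ψ ihφ ihψ => cases s with
    | pos => exact ⟨ihφ h.1, ihψ h.2⟩
    | neg => exact fun D hCD => h D (hBC.trans hCD)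

theorem monotonicity (Γ Δ : Set Form) (χ : Form) (s : Sign) (B C : Base)
    (h : Cons B Γ Δ s χ) (hBC : B ⊆ C) : Cons C Γ Δ s χ := by
  by_cases hempty : Γ = ∅ ∧ Δ = ∅
  · rw [Cons, if_pos hempty] at h ⊢
    exact h.mono hBC
  · rw [Cons, if_neg hempty] at h ⊢
    exact fun D hCD => h D (hBC.trans hCD)
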